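/- Let F = (A, C) be a finite AAF. An AAF F' = (A, C') is a combined preference graph of F (i.e., C' = (C \ C_↔) ∪ conv(F_0) ∪ F_1 for some preference function f over F) if and only if there exists a CC-wise total order ≼ on F such that F' = F^3_≼, the Reduction 3 of F under ≼. -/
import Mathlib


/-- The three labels of a labelling: `inn` (in), `out`, `undec`. -/
inductive Label where
  | inn : Label
  | out : Label
  | undec : Label
deriving DecidableEq

/-- Undirected connectivity: reachability in the symmetric closure of `C`.
`Conn C a b` holds iff `a` and `b` are joined by an undirected path, i.e.
they lie in the same connected component of `(A, C)`. -/
def Conn {A : Type*} (C : A → A → Prop) : A → A → Prop :=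
  Relation.ReflTransGen (fun x y => C x y ∨ C y x)

/-- A CC-wise total order on the AAF `(A, C)`: a reflexive transitive relation
whose restriction to each connected component is total. -/
structure CCOrder {A : Type*} (C : A → A → Prop) where
  le : A → A → Prop
  refl : ∀ a, le a a
  trans : ∀ a b c, le a b → le b c → le a c
  total : ∀ a b, Conn C a b → le a b ∨ le b a

/-- Strict part: `a ≺ b` iff `a ≼ b` and not `b ≼ a`. -/
def CCOrder.lt {A : Type*} {C : A → A → Prop} (r : CCOrder C) (a b : A) : Prop :=
  r.le a b ∧ ¬ r.le b a

/-- Reduction 1: `C₁ = {(a,b) | ((a,b) ∈ C ∧ b ≼ a) ∨ ((b,a) ∈ C ∧ b ≺ a)}`. -/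
def red1 {A : Type*} (C : A → A → Prop) (r : CCOrder C) (a b : A) : Prop :=
  (C a b ∧ r.le b a) ∨ (C b a ∧ r.lt b a)

/-- Reduction 2: `C₂ = {(a,b) ∈ C | b ≼ a ∨ (b,a) ∉ C}`. -/
def red2 {A : Type*} (C : A → A → Prop) (r : CCOrder C) (a b : A) : Prop :=
  C a b ∧ (r.le b a ∨ ¬ C b a)

/-- Reduction 3: `C₁ ∪ C₂`. -/
def red3 {A : Type*} (C : A → A → Prop) (r : CCOrder C) (a b : A) : Prop :=
  red1 C r a b ∨ red2 C r a b

/-- Reduction 4: `C₄ = {(a,b) ∈ C | b ≼ a}`. -/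
def red4 {A : Type*} (C : A → A → Prop) (r : CCOrder C) (a b : A) : Prop :=
  C a b ∧ r.le b a

/-- `l` is a complete labelling of the attack relation `C`:
`l a = in` iff all attackers of `a` are `out`, and
`l a = out` iff some attacker of `a` is `in` (and `undec` otherwise,
which is automatic for a three-valued labelling). -/
def CompleteLabelling {A : Type*} (C : A → A → Prop) (l : A → Label) : Prop :=
  ∀ a, (l a = Label.inn ↔ ∀ b, C b a → l b = Label.out) ∧
       (l a = Label.out ↔ ∃ b, C b a ∧ l b = Label.inn)

/-- `(a,b) ∈ F₁`: an attack of `C` assigned value 1 by `f`. -/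
def inF1 {A : Type*} (C : A → A → Prop) (f : A → A → Bool) (a b : A) : Prop :=
  C a b ∧ f a b = true

/-- `(a,b) ∈ F₀`: an attack of `C` assigned value 0 by `f`. -/
def inF0 {A : Type*} (C : A → A → Prop) (f : A → A → Bool) (a b : A) : Prop :=
  C a b ∧ f a b = false

/-- The relation `conv(F₀) ∪ F₁`. -/
def Drel {A : Type*} (C : A → A → Prop) (f : A → A → Bool) (a b : A) : Prop :=
  inF0 C f b a ∨ inF1 C f a b

/-- The relation `F₁ \ conv(F₀)`. -/
def Erel {A : Type*} (C : A → A → Prop) (f : A → A → Bool) (a b : A) : Prop :=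
  inF1 C f a b ∧ ¬ inF0 C f b a

/-- `f` is a preference function over `(A, C)`: every directed cycle of
`conv(F₀) ∪ F₁` is entirely contained in `F₁ \ conv(F₀)`.  Equivalently
(edge-wise): every edge of `conv(F₀) ∪ F₁` lying on a directed cycle
(i.e. admitting a return path) belongs to `F₁ \ conv(F₀)`. -/
def IsPrefFun {A : Type*} (C : A → A → Prop) (f : A → A → Bool) : Prop :=
  ∀ a b, Drel C f a b → Relation.ReflTransGen (Drel C f) b a → Erel C f a b

/-- A ranking function for `(F, l)` (assuming no argument is labelled `out`):
(1) every attack touching an `in`-labelled argument strictly decreases rank, and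
(2) every `undec` argument has an `undec` attacker of rank at most its own. -/
def IsRanking {A : Type*} (C : A → A → Prop) (l : A → Label) (ψ : A → ℤ) : Prop :=
  (∀ u v, C u v → (l u = Label.inn ∨ l v = Label.inn) → ψ u > ψ v) ∧
  (∀ u, l u = Label.undec → ∃ v, C v u ∧ l v = Label.undec ∧ ψ v ≤ ψ u)
/-- Rank of a vertex: number of vertices reachable from it. -/
noncomputable def rnk {A : Type*} (D : A → A → Prop) (a : A) : ℕ :=
  {x | Relation.ReflTransGen D a x}.ncard

lemma rnk_le {A : Type*} [Finite A] {D : A → A → Prop} {a b : A}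
    (h : Relation.ReflTransGen D a b) : rnk D b ≤ rnk D a :=
  Set.ncard_le_ncard (fun _ hx => h.trans hx) (Set.toFinite _)

lemma rnk_lt {A : Type*} [Finite A] {D : A → A → Prop} {a b : A}
    (h : Relation.ReflTransGen D a b) (h2 : ¬ Relation.ReflTransGen D b a) :
    rnk D b < rnk D a :=
  Set.ncard_lt_ncard
    ((Set.ssubset_iff_of_subset (fun _ hx => h.trans hx)).mpr
      ⟨a, Relation.ReflTransGen.refl, fun hc => h2 hc⟩) (Set.toFinite _)

/-- `F' = (A, C')` is a combined preference graph of `F`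
iff `F' = F³_≼` for some CC-wise total order `≼` on `F`. -/
theorem stmt6 {A : Type*} [Fintype A] (C C' : A → A → Prop) :
    (∃ f : A → A → Bool, IsPrefFun C f ∧
        ∀ a b, C' a b ↔ ((C a b ∧ ¬ C b a) ∨ Drel C f a b)) ↔
      (∃ r : CCOrder C, ∀ a b, C' a b ↔ red3 C r a b) := by
  classical
  constructor
  · rintro ⟨f, hpf, hC'⟩
    refine ⟨⟨fun x y => rnk (Drel C f) x ≤ rnk (Drel C f) y,
      fun a => le_refl _, fun a b c => le_trans, fun a b _ => le_total _ _⟩, ?_⟩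
    intro a b
    rw [hC' a b]
    simp only [red3, red1, red2, CCOrder.lt, Drel, inF0, inF1]
    constructor
    · rintro (⟨hab, hnba⟩ | (⟨hba, hf0⟩ | ⟨hab, hf1⟩))
      · exact Or.inr ⟨hab, Or.inr hnba⟩
      · -- Drel a b via conv(F0)
        have hD : Drel C f a b := Or.inl ⟨hba, hf0⟩
        by_cases hab : C a b
        · exact Or.inr ⟨hab, Or.inl (rnk_le (Relation.ReflTransGen.single hD))⟩
        · have hnE : ¬ Erel C f a b := fun hE => hab hE.1.1
          have hnR : ¬ Relation.ReflTransGen (Drel C f) b a :=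
            fun hR => hnE (hpf a b hD hR)
          have hlt := rnk_lt (Relation.ReflTransGen.single hD) hnR
          exact Or.inl (Or.inr ⟨hba, le_of_lt hlt, not_le.mpr hlt⟩)
      · have hD : Drel C f a b := Or.inr ⟨hab, hf1⟩
        exact Or.inr ⟨hab, Or.inl (rnk_le (Relation.ReflTransGen.single hD))⟩
    · have key : ∀ (hab : C a b), rnk (Drel C f) b ≤ rnk (Drel C f) a →
          (C a b ∧ ¬C b a) ∨ ((C b a ∧ f b a = false) ∨ (C a b ∧ f a b = true)) := by
        intro hab hle
        by_cases hba : C b a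
        · rcases Bool.eq_false_or_eq_true (f b a) with h1 | h1
          swap
          · exact Or.inr (Or.inl ⟨hba, h1⟩)
          · rcases Bool.eq_false_or_eq_true (f a b) with h2 | h2
            swap
            · exfalso
              have hDba : Drel C f b a := Or.inr ⟨hba, h1⟩
              have hnE : ¬ Erel C f b a := fun hE => hE.2 ⟨hab, h2⟩
              have hnR : ¬ Relation.ReflTransGen (Drel C f) a b :=
                fun hR => hnE (hpf b a hDba hR)
              exact absurd hle
                (not_le.mpr (rnk_lt (Relation.ReflTransGen.single hDba) hnR))
            · exact Or.inr (Or.inr ⟨hab, h2⟩)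
              
        · exact Or.inl ⟨hab, hba⟩
      rintro ((⟨hab, hle⟩ | ⟨hba, hle, hnle⟩) | ⟨hab, (hle | hnba)⟩)
      · exact key hab hle
      · -- show f b a = false
        rcases Bool.eq_false_or_eq_true (f b a) with h1 | h1
        swap
        · exact Or.inr (Or.inl ⟨hba, h1⟩)
        · exfalso
          have hDba : Drel C f b a := Or.inr ⟨hba, h1⟩
          exact hnle (rnk_le (Relation.ReflTransGen.single hDba))
      · exact key hab hle
      · exact Or.inl ⟨hab, hnba⟩
  · rintro ⟨r, hr⟩
    refine ⟨fun a b => if r.le b a then true else false, ?_, ?_⟩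
    · -- IsPrefFun
      have hstep : ∀ x y, Drel C (fun a b => if r.le b a then true else false) x y →
          r.le y x := by
        intro x y hD
        rcases hD with ⟨hCyx, hf⟩ | ⟨hCxy, hf⟩
        · by_cases h : r.le x y
          · simp [h] at hf
          · rcases r.total x y (Relation.ReflTransGen.single (Or.inr hCyx)) with h' | h'
            · exact absurd h' h
            · exact h'
        · by_cases h : r.le y x
          · exact h
          · simp [h] at hf
      intro a b hD hR
      have hab' : r.le a b := by
        clear hD
        induction hR with
        | refl => exact r.refl _
        | tail hbc hca ih => exact r.trans _ _ _ (hstep _ _ hca) ih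
      rcases hD with ⟨hCba, hf⟩ | ⟨hCab, hf⟩
      · simp [hab'] at hf
      · refine ⟨⟨hCab, hf⟩, ?_⟩
        rintro ⟨-, hf0⟩
        simp [hab'] at hf0
    · intro a b
      rw [hr a b]
      constructor
      · rintro ((⟨hab, hle⟩ | ⟨hba, hle, hnle⟩) | ⟨hab, (hle | hnba)⟩)
        · exact Or.inr (Or.inr ⟨hab, if_pos hle⟩)
        · exact Or.inr (Or.inl ⟨hba, if_neg hnle⟩)
        · exact Or.inr (Or.inr ⟨hab, if_pos hle⟩)
        · exact Or.inl ⟨hab, hnba⟩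
      · rintro (⟨hab, hnba⟩ | (⟨hba, hf⟩ | ⟨hab, hf⟩))
        · exact Or.inr ⟨hab, Or.inr hnba⟩
        · have hnle : ¬ r.le a b := by
            by_cases h : r.le a b
            · simp [h] at hf
            · exact h
          have hle : r.le b a := by
            rcases r.total b a (Relation.ReflTransGen.single (Or.inl hba)) with h | h
            · exact h
            · exact absurd h hnle
          exact Or.inl (Or.inr ⟨hba, hle, hnle⟩)
        · have hle : r.le b a := by
            by_cases h : r.le b a
            · exact h
            · simp [h] at hf
          exact Or.inl (Or.inl ⟨hab, hle⟩)
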